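/- arXiv:1901.06832 — 3 statements merged into one kernel-verified Lean document; each statement's English description precedes it below -/
import Mathlib

section
/- For every n ≥ 1 and every even integer 2k, the Fourier coefficient of |P_n|² at 2k with k ≠ 0 vanishes; equivalently, writing |P_n(e^{it})|² = Σ_{j=-2^n+1}^{2^n-1} a_j e^{ijt}, one has a_{2k} = 0 for all k ≠ 0. -/
open Polynomial

/-- Rudin-Shapiro pair (P_n, Q_n). -/
noncomputable def RS : ℕ → Polynomial ℤ × Polynomial ℤ
  | 0 => (1, 1)
  | n + 1 => ((RS n).1 + X ^ (2 ^ n) * (RS n).2, (RS n).1 - X ^ (2 ^ n) * (RS n).2)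

noncomputable def RSP (n : ℕ) : Polynomial ℤ := (RS n).1
noncomputable def RSQ (n : ℕ) : Polynomial ℤ := (RS n).2

/-- evaluation at a complex number -/
noncomputable def Pe (n : ℕ) (z : ℂ) : ℂ := Polynomial.aeval z (RSP n)
noncomputable def Qe (n : ℕ) (z : ℂ) : ℂ := Polynomial.aeval z (RSQ n)
/-- The k-th Fourier coefficient of `t ↦ f (e^{it})`:
`(1/2π) ∫₀^{2π} f(e^{it}) e^{-ikt} dt`. -/
noncomputable def fc (f : ℂ → ℂ) (k : ℤ) : ℂ :=
  (1 / (2 * Real.pi)) *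
    ∫ t in (0:ℝ)..(2 * Real.pi),
      f (Complex.exp (t * Complex.I)) * Complex.exp (-(k : ℂ) * t * Complex.I)

/-- z ↦ |P_n(z)|² on the unit circle -/
noncomputable def fP (n : ℕ) (z : ℂ) : ℂ := Pe n z * (starRingEnd ℂ) (Pe n z)
/-- z ↦ conj(P_n(z)) Q_n(z) on the unit circle -/
noncomputable def fPQ (n : ℕ) (z : ℂ) : ℂ := (starRingEnd ℂ) (Pe n z) * Qe n z
/-- z ↦ P_n(z) conj(Q_n(z)) on the unit circle -/
noncomputable def fQP (n : ℕ) (z : ℂ) : ℂ := Pe n z * (starRingEnd ℂ) (Qe n z)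

/-!
On the unit circle the matrix `M_n(z) = [[P_n(z), P_n(-z)], [Q_n(z), Q_n(-z)]]` satisfies
`M_{n+1} = B(z^{2^n}) M_n` for `n ≥ 1` (there `2^n` is even, so `(-z)^{2^n} = z^{2^n}`), where
`B(w) = [[1, w], [1, -w]]` is `√2` times a unitary matrix when `|w| = 1`; also `M_1 = B(z) B(1)`.
Hence `M_n M_nᴴ = 2^{n+1} I`, whose corner entry says `|P_n(z)|² + |P_n(-z)|² = 2^{n+1}`.
The even Fourier coefficients of `f` are those of `(f(z) + f(-z)) / 2`, which is constant here.
-/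

open Complex

theorem integral_exp_int_mul_I_eq_zero {m : ℤ} (hm : m ≠ 0) :
    ∫ t in (0 : ℝ)..2 * Real.pi, exp (-(m : ℂ) * t * I) = 0 := by
  have hmI : -(m : ℂ) * I ≠ 0 := by simp [hm]
  have hperiod : -(m : ℂ) * I * ((2 * Real.pi : ℝ) : ℂ) = (-m : ℤ) * (2 * Real.pi * I) := by
    push_cast; ring
  simp_rw [mul_right_comm _ _ I]
  rw [integral_exp_mul_complex hmI, hperiod, exp_int_mul_two_pi_mul_I]
  simp

theorem fc_const_of_ne_zero (c : ℂ) {m : ℤ} (hm : m ≠ 0) : fc (fun _ => c) m = 0 := by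
  rw [fc, intervalIntegral.integral_const_mul, integral_exp_int_mul_I_eq_zero hm, mul_zero,
    mul_zero]

theorem fc_add {f g : ℂ → ℂ} (hf : Continuous f) (hg : Continuous g) (m : ℤ) :
    fc (f + g) m = fc f m + fc g m := by
  simp only [fc, Pi.add_apply, add_mul, ← mul_add]
  rw [intervalIntegral.integral_add] <;> exact (by fun_prop : Continuous _).intervalIntegrable _ _

theorem fc_congr {f g : ℂ → ℂ} (h : ∀ z, ‖z‖ = 1 → f z = g z) (m : ℤ) : fc f m = fc g m := by
  simp only [fc, h _ (norm_exp_ofReal_mul_I _)]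

theorem fc_comp_neg (f : ℂ → ℂ) (m : ℤ) : fc (fun z => f (-z)) m = (-1) ^ m * fc f m := by
  set g : ℝ → ℂ := fun t => f (exp (t * I)) * exp (-(m : ℂ) * t * I)
  have hg : Function.Periodic g (2 * Real.pi) := by
    intro t
    have harg : ((t + 2 * Real.pi : ℝ) : ℂ) * I = t * I + 2 * Real.pi * I := by
      push_cast; ring
    have harg' : -(m : ℂ) * ((t + 2 * Real.pi : ℝ) : ℂ) * I
        = -m * t * I + ((-m : ℤ) : ℂ) * (2 * Real.pi * I) := by push_cast; ring
    simp only [g, harg, harg', exp_periodic _, exp_periodic.int_mul _ _]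
  -- `-e^{it} = e^{i(t + π)}`
  have hshift : ∀ t : ℝ,
      f (-exp (t * I)) * exp (-(m : ℂ) * t * I) = (-1) ^ m * g (t + Real.pi) := by
    intro t
    have harg : ((t + Real.pi : ℝ) : ℂ) * I = t * I + Real.pi * I := by push_cast; ring
    have harg' : -(m : ℂ) * ((t + Real.pi : ℝ) : ℂ) * I
        = -m * t * I + ((-m : ℤ) : ℂ) * (Real.pi * I) := by push_cast; ring
    have hsign : (-1 : ℂ) ^ m * (-1) ^ (-m) = 1 := by
      rw [← zpow_add₀ (by norm_num), add_neg_cancel, zpow_zero]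
    simp only [g, harg, harg', exp_add, exp_int_mul, exp_pi_mul_I, mul_neg_one]
    linear_combination (-f (-exp (t * I)) * exp (-m * t * I)) * hsign
  have hint :
      ∫ t in (0 : ℝ)..2 * Real.pi, g (t + Real.pi) = ∫ t in (0 : ℝ)..2 * Real.pi, g t := by
    rw [intervalIntegral.integral_comp_add_right, zero_add, add_comm _ Real.pi,
      hg.intervalIntegral_add_eq Real.pi 0, zero_add]
  simp only [fc, hshift, intervalIntegral.integral_const_mul, hint]
  ring

theorem fc_two_mul_eq_zero_of_add_comp_neg_eq_const {f : ℂ → ℂ} (hf : Continuous f) {c : ℂ}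
    (hc : ∀ z, ‖z‖ = 1 → f z + f (-z) = c) {k : ℤ} (hk : k ≠ 0) : fc f (2 * k) = 0 := by
  have hsym : fc (fun z => f (-z)) (2 * k) = fc f (2 * k) := by
    rw [fc_comp_neg, zpow_mul]
    norm_num
  have hsum : fc f (2 * k) + fc (fun z => f (-z)) (2 * k) = 0 := by
    rw [← fc_add hf (by fun_prop : Continuous fun z => f (-z)),
      fc_congr (f := f + fun z => f (-z)) (g := fun _ => c) hc,
      fc_const_of_ne_zero c (by omega)]
  linear_combination hsum / 2 - hsym / 2

@[simp]
theorem Pe_zero (z : ℂ) : Pe 0 z = 1 := by simp [Pe, RSP, RS]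

@[simp]
theorem Qe_zero (z : ℂ) : Qe 0 z = 1 := by simp [Qe, RSQ, RS]

theorem Pe_succ (n : ℕ) (z : ℂ) : Pe (n + 1) z = Pe n z + z ^ 2 ^ n * Qe n z := by
  simp [Pe, Qe, RSP, RSQ, RS]

theorem Qe_succ (n : ℕ) (z : ℂ) : Qe (n + 1) z = Pe n z - z ^ 2 ^ n * Qe n z := by
  simp [Pe, Qe, RSP, RSQ, RS]

theorem continuous_fP (n : ℕ) : Continuous (fP n) := by
  have hP : Continuous (Pe n) := Polynomial.continuous_aeval _
  exact hP.mul (continuous_conj.comp hP)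

open Matrix

noncomputable def rsMatrix (n : ℕ) (z : ℂ) : Matrix (Fin 2) (Fin 2) ℂ :=
  !![Pe n z, Pe n (-z); Qe n z, Qe n (-z)]

def butterfly (w : ℂ) : Matrix (Fin 2) (Fin 2) ℂ := !![1, w; 1, -w]

theorem butterfly_mul_conjTranspose {w : ℂ} (hw : ‖w‖ = 1) :
    butterfly w * (butterfly w)ᴴ = (2 : ℂ) • 1 := by
  have hw' : w * (starRingEnd ℂ) w = 1 := by rw [mul_conj', hw]; simp
  ext i j
  fin_cases i <;> fin_cases j <;> simp [butterfly, Matrix.mul_apply, Fin.sum_univ_two, hw'] <;>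
    norm_num

theorem butterfly_mul_mul_conjTranspose {w : ℂ} (hw : ‖w‖ = 1) {M : Matrix (Fin 2) (Fin 2) ℂ}
    {c : ℂ} (hM : M * Mᴴ = c • 1) :
    butterfly w * M * (butterfly w * M)ᴴ = (2 * c) • 1 := by
  rw [conjTranspose_mul, Matrix.mul_assoc, ← Matrix.mul_assoc M, hM, Matrix.smul_mul,
    Matrix.one_mul, Matrix.mul_smul, butterfly_mul_conjTranspose hw, smul_smul, mul_comm]

theorem rsMatrix_one (z : ℂ) : rsMatrix 1 z = butterfly z * butterfly 1 := by
  ext i j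
  fin_cases i <;> fin_cases j <;>
    simp [rsMatrix, butterfly, Pe_succ, Qe_succ, Matrix.mul_apply, Fin.sum_univ_two,
      sub_eq_add_neg, add_comm]

theorem rsMatrix_succ {n : ℕ} (hn : n ≠ 0) (z : ℂ) :
    rsMatrix (n + 1) z = butterfly (z ^ 2 ^ n) * rsMatrix n z := by
  have heven : (-z) ^ 2 ^ n = z ^ 2 ^ n := (Nat.even_pow.mpr ⟨even_two, hn⟩).neg_pow z
  ext i j
  fin_cases i <;> fin_cases j <;>
    simp [rsMatrix, butterfly, Pe_succ, Qe_succ, heven, Matrix.mul_apply, Fin.sum_univ_two,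
      sub_eq_add_neg]

theorem rsMatrix_mul_conjTranspose (n : ℕ) {z : ℂ} (hz : ‖z‖ = 1) :
    rsMatrix (n + 1) z * (rsMatrix (n + 1) z)ᴴ = (2 ^ (n + 2) : ℂ) • 1 := by
  induction n with
  | zero =>
    rw [rsMatrix_one, butterfly_mul_mul_conjTranspose hz (butterfly_mul_conjTranspose (by simp))]
    norm_num
  | succ n ih =>
    rw [rsMatrix_succ n.succ_ne_zero, butterfly_mul_mul_conjTranspose (by simp [hz]) ih]
    ring_nf

theorem fP_add_fP_neg (n : ℕ) {z : ℂ} (hz : ‖z‖ = 1) : fP n z + fP n (-z) = 2 ^ (n + 1) := by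
  cases n with
  | zero => norm_num [fP]
  | succ n =>
    have hcorner := congrFun (congrFun (rsMatrix_mul_conjTranspose n hz) 0) 0
    simpa [rsMatrix, Matrix.mul_apply, Fin.sum_univ_two, fP] using hcorner

theorem rudin_shapiro_even_autocorrelation_vanish_general (n : ℕ) (k : ℤ) (hk : k ≠ 0) :
    fc (fP n) (2 * k) = 0 :=
  fc_two_mul_eq_zero_of_add_comp_neg_eq_const (continuous_fP n)
    (fun _ hz => fP_add_fP_neg n hz) hk

theorem rudin_shapiro_even_autocorrelation_vanish (n : ℕ) (hn : 1 ≤ n) (k : ℤ) (hk : k ≠ 0) :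
    fc (fP n) (2 * k) = 0 :=
  rudin_shapiro_even_autocorrelation_vanish_general n k hk
end

section
/- There is a constant C₁ > 0 such that for all n ≥ 1, the autocorrelation coefficient of |P_n|² at index k_n = (2·2^n + (−1)^n)/3 satisfies |a_{k_n}| ≥ C₁·λ^{n/2}, where λ is the real root of x³ − 5x² + 12x − 16. -/
open Polynomial

/-!
The Fourier coefficients of `|P_n|²` are the aperiodic autocorrelations `a_k` of the
coefficients of `P_n`. Written as Laurent polynomials `P(T⁻¹) Q(T)`, the auto- and
cross-correlations of `P_n, Q_n` at level `n + 1` are ring expressions in those at level `n`,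
shifted by `± 2^n`. Since `k_{n+1} = 2^{n+1} - k_n`, most shifted terms leave the support
`(-2^n, 2^n)`, and together with `|P_n|² + |Q_n|² = 2^{n+1}` this gives
`x_{n+3} = x_{n+2} + 2 x_{n+1} - 4 x_n` for `x_n = a_{k_n}`. The characteristic polynomial
`t³ - t² - 2t + 4` has the real root `-√λ` and two complex roots of modulus
`√(λ + √λ - 2) < √λ`, and the coefficient of `(-√λ)^n` in `x_n` is nonzero, so
`|x_n| ≥ c λ^{n/2}` for large `n`; for the remaining `n` it suffices that every `x_n` is odd.
-/

open scoped LaurentPolynomial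
open LaurentPolynomial (T invert)
open Complex (exp I)
open scoped Real

namespace LaurentPolynomial

section CommRing

variable {R : Type*} [CommRing R]

/-- The coefficient of `T ^ k` is the aperiodic correlation `∑ j, f_j g_{j+k}`. -/
noncomputable def correlation (f g : R[T;T⁻¹]) : R[T;T⁻¹] := invert f * g

lemma invert_correlation (f g : R[T;T⁻¹]) : invert (correlation f g) = correlation g f := by
  rw [correlation, correlation, map_mul, involutive_invert, mul_comm]

lemma coeff_correlation_neg (f g : R[T;T⁻¹]) (k : ℤ) :
    (correlation f g).coeff (-k) = (correlation g f).coeff k := by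
  rw [← invert_correlation, invert_apply, neg_neg]

lemma correlation_neg_left (f g : R[T;T⁻¹]) : correlation (-f) g = -correlation f g := by
  rw [correlation, correlation, map_neg, neg_mul]

lemma correlation_neg_right (f g : R[T;T⁻¹]) : correlation f (-g) = -correlation f g :=
  mul_neg _ _

lemma correlation_add_mul_T (f g h k : R[T;T⁻¹]) (m : ℤ) :
    correlation (f + g * T m) (h + k * T m) = correlation f h + correlation g k +
      correlation f k * T m + correlation g h * T (-m) := by
  have hT : (T (-m) * T m : R[T;T⁻¹]) = 1 := by rw [← T_add, neg_add_cancel, T_zero]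
  simp only [correlation, map_add, map_mul, invert_T]
  linear_combination (invert g * k) * hT

lemma coeff_mul_T (f : R[T;T⁻¹]) (m k : ℤ) : (f * T m).coeff k = f.coeff (k - m) := by
  rw [T, AddMonoidAlgebra.coeff_mul_single_apply, mul_one, sub_eq_add_neg]

lemma coeff_one (k : ℤ) : (1 : R[T;T⁻¹]).coeff k = if k = 0 then 1 else 0 := by
  simp only [← T_zero, T_apply, eq_comm]

end CommRing

section Eval

variable {R S : Type*} [CommSemiring R] [CommSemiring S]

lemma eval₂_eq_sum (f : R →+* S) (x : Sˣ) (g : R[T;T⁻¹]) :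
    eval₂ f x g = g.coeff.sum fun n r => f r * ↑(x ^ n) := by
  induction g using LaurentPolynomial.induction_on' with
  | add g h hg hh =>
    rw [map_add, hg, hh, AddMonoidAlgebra.coeff_add, Finsupp.sum_add_index'] <;> simp [add_mul]
  | C_mul_T n r =>
    rw [eval₂_C_mul_T, ← single_eq_C_mul_T]
    simp [-single_eq_C_mul_T]

lemma eval₂_invert (f : R →+* S) (x : Sˣ) (g : R[T;T⁻¹]) :
    eval₂ f x (invert g) = eval₂ f x⁻¹ g := by
  induction g using LaurentPolynomial.induction_on' with
  | add g h hg hh => rw [map_add, map_add, map_add, hg, hh]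
  | C_mul_T n r => simp [zpow_neg, inv_zpow']

end Eval

end LaurentPolynomial

open LaurentPolynomial

lemma integral_exp_mul_I_zpow_mul (m k : ℤ) :
    ∫ t in (0:ℝ)..2 * π, exp (t * I) ^ m * exp (-k * t * I) =
      if m = k then 2 * (π : ℂ) else 0 := by
  have hexp : ∀ t : ℝ, exp (t * I) ^ m * exp (-k * t * I) = exp ((m - k) * I * t) := fun t => by
    rw [← Complex.exp_int_mul, ← Complex.exp_add]; ring_nf
  simp_rw [hexp]
  split_ifs with h
  · simp [h]
  · have hmk : ((m : ℂ) - k) * I ≠ 0 := by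
      simpa [sub_eq_zero, Complex.I_ne_zero] using h
    have h2pi : ((m : ℂ) - k) * I * ↑(2 * π) = ((m - k : ℤ) : ℂ) * (2 * π * I) := by
      push_cast; ring
    rw [integral_exp_mul_complex hmk, h2pi, Complex.exp_int_mul_two_pi_mul_I]
    simp

lemma fc_eq_coeff (f : ℂ → ℂ) (g : ℤ[T;T⁻¹])
    (hf : ∀ t : ℝ, f (exp (t * I)) =
      eval₂ (Int.castRingHom ℂ) (Units.mk0 _ (Complex.exp_ne_zero (t * I))) g)
    (k : ℤ) : fc f k = g.coeff k := by
  have hsum : ∀ t : ℝ, f (exp (t * I)) * exp (-k * t * I) =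
      ∑ m ∈ g.coeff.support, g.coeff m * (exp (t * I) ^ m * exp (-k * t * I)) := fun t => by
    rw [hf, LaurentPolynomial.eval₂_eq_sum, Finsupp.sum, Finset.sum_mul]
    simp [mul_assoc]
  have hint : ∀ m : ℤ, IntervalIntegrable (fun t : ℝ => exp (t * I) ^ m * exp (-k * t * I))
      MeasureTheory.volume 0 (2 * π) := fun m => by
    refine Continuous.intervalIntegrable ?_ _ _
    exact (Continuous.zpow₀ (by fun_prop) m fun t => Or.inl (Complex.exp_ne_zero _)).mul
      (by fun_prop)
  simp only [fc, hsum]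
  rw [intervalIntegral.integral_finsetSum fun m _ => (hint m).const_mul _]
  simp only [intervalIntegral.integral_const_mul, integral_exp_mul_I_zpow_mul, mul_ite, mul_zero,
    Finset.sum_ite_eq']
  split_ifs with hk
  · field_simp
  · simp [Finsupp.notMem_support_iff.mp hk]

lemma starRingEnd_aeval (p : ℤ[X]) (z : ℂ) :
    starRingEnd ℂ (aeval z p) = aeval (starRingEnd ℂ z) p := by
  rw [aeval_def, aeval_def, Polynomial.hom_eval₂,
    RingHom.ext_int ((starRingEnd ℂ).comp (algebraMap ℤ ℂ)) (algebraMap ℤ ℂ)]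

lemma fc_conj_aeval_mul_aeval (p q : ℤ[X]) (k : ℤ) :
    fc (fun z => starRingEnd ℂ (aeval z p) * aeval z q) k =
      (correlation (toLaurent p) (toLaurent q)).coeff k := by
  refine fc_eq_coeff _ _ (fun t => ?_) k
  rw [correlation, map_mul, eval₂_invert, eval₂_toLaurent, eval₂_toLaurent, starRingEnd_aeval,
    ← Complex.exp_conj]
  simp [aeval_def, Complex.exp_neg]

noncomputable def rsP (n : ℕ) : ℤ[T;T⁻¹] := toLaurent (RSP n)
noncomputable def rsQ (n : ℕ) : ℤ[T;T⁻¹] := toLaurent (RSQ n)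

lemma rsP_zero : rsP 0 = 1 := map_one _
lemma rsQ_zero : rsQ 0 = 1 := map_one _

lemma rsP_succ (n : ℕ) : rsP (n + 1) = rsP n + rsQ n * T (2 ^ n) := by
  change toLaurent (RSP n + X ^ 2 ^ n * RSQ n) = _
  rw [map_add, map_mul, Polynomial.toLaurent_X_pow, mul_comm]
  norm_cast

lemma rsQ_succ (n : ℕ) : rsQ (n + 1) = rsP n + -rsQ n * T (2 ^ n) := by
  change toLaurent (RSP n - X ^ 2 ^ n * RSQ n) = _
  rw [map_sub, map_mul, Polynomial.toLaurent_X_pow, neg_mul, ← sub_eq_add_neg, mul_comm]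
  norm_cast

lemma fc_fP (n : ℕ) (k : ℤ) : fc (fP n) k = (correlation (rsP n) (rsP n)).coeff k := by
  have hfP : fP n = fun z => starRingEnd ℂ (aeval z (RSP n)) * aeval z (RSP n) :=
    funext fun z => mul_comm _ _
  rw [hfP, fc_conj_aeval_mul_aeval]
  rfl

lemma correlation_rsP_add_correlation_rsQ (n : ℕ) :
    correlation (rsP n) (rsP n) + correlation (rsQ n) (rsQ n) =
      LaurentPolynomial.C (2 ^ (n + 1)) := by
  induction n with
  | zero => simp [rsP_zero, rsQ_zero, correlation, one_add_one_eq_two]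
  | succ n ih =>
    simp only [rsP_succ, rsQ_succ, correlation_add_mul_T, correlation_neg_left,
      correlation_neg_right, neg_neg]
    rw [pow_succ, map_mul, ← ih, map_ofNat]
    ring

lemma coeff_correlation_rs_eq_zero (n : ℕ) (k : ℤ) (hk : 2 ^ n ≤ |k|) :
    (correlation (rsP n) (rsP n)).coeff k = 0 ∧ (correlation (rsQ n) (rsQ n)).coeff k = 0 ∧
      (correlation (rsP n) (rsQ n)).coeff k = 0 ∧ (correlation (rsQ n) (rsP n)).coeff k = 0 := by
  induction n generalizing k with
  | zero =>
    have hk0 : k ≠ 0 := by rintro rfl; simp at hk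
    simp [rsP_zero, rsQ_zero, correlation, LaurentPolynomial.coeff_one, hk0]
  | succ n ih =>
    have h2n : (0 : ℤ) < 2 ^ n := by positivity
    rw [pow_succ] at hk
    have hsub : ∀ m : ℤ, |m| ≤ 2 ^ n → 2 ^ n ≤ |k - m| := fun m hm => by
      linarith [abs_sub_abs_le_abs_sub k m]
    have h₁ := ih k (by linarith)
    have h₂ := ih (k - 2 ^ n) (hsub _ (abs_of_pos h2n).le)
    have h₃ := ih (k - -2 ^ n) (hsub _ (by rw [abs_neg, abs_of_pos h2n]))
    simp only [rsP_succ, rsQ_succ, correlation_add_mul_T, correlation_neg_left,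
      correlation_neg_right, neg_neg, AddMonoidAlgebra.coeff_add, AddMonoidAlgebra.coeff_neg,
      Finsupp.add_apply, Finsupp.neg_apply, coeff_mul_T, h₁, h₂, h₃]
    simp

lemma coeff_correlation_rsP_succ (n : ℕ) (k : ℤ) :
    (correlation (rsP (n + 1)) (rsP (n + 1))).coeff k =
      (correlation (rsP n) (rsP n)).coeff k + (correlation (rsQ n) (rsQ n)).coeff k +
        (correlation (rsP n) (rsQ n)).coeff (k - 2 ^ n) +
          (correlation (rsQ n) (rsP n)).coeff (k + 2 ^ n) := by
  rw [rsP_succ, correlation_add_mul_T]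
  simp only [AddMonoidAlgebra.coeff_add, Finsupp.add_apply, coeff_mul_T, sub_neg_eq_add]

lemma coeff_correlation_rsP_rsQ_succ (n : ℕ) (k : ℤ) :
    (correlation (rsP (n + 1)) (rsQ (n + 1))).coeff k =
      (correlation (rsP n) (rsP n)).coeff k - (correlation (rsQ n) (rsQ n)).coeff k -
        (correlation (rsP n) (rsQ n)).coeff (k - 2 ^ n) +
          (correlation (rsQ n) (rsP n)).coeff (k + 2 ^ n) := by
  rw [rsP_succ, rsQ_succ, correlation_add_mul_T, correlation_neg_right, correlation_neg_right]
  simp only [AddMonoidAlgebra.coeff_add, AddMonoidAlgebra.coeff_neg, Finsupp.add_apply,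
    Finsupp.neg_apply, neg_mul, coeff_mul_T, sub_neg_eq_add]
  ring

lemma coeff_correlation_rsQ_of_ne_zero (n : ℕ) {k : ℤ} (hk : k ≠ 0) :
    (correlation (rsQ n) (rsQ n)).coeff k = -(correlation (rsP n) (rsP n)).coeff k := by
  have h := congrArg (fun f : ℤ[T;T⁻¹] => f.coeff k) (correlation_rsP_add_correlation_rsQ n)
  simp only [AddMonoidAlgebra.coeff_add, Finsupp.add_apply, C_apply, if_neg hk] at h
  linarith

def rsIndex : ℕ → ℤ
  | 0 => 1
  | n + 1 => 2 ^ (n + 1) - rsIndex n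

lemma rsIndex_eq (n : ℕ) : rsIndex n = (2 * 2 ^ n + (-1) ^ n) / 3 := by
  have h : 3 * rsIndex n = 2 * 2 ^ n + (-1) ^ n := by
    induction n with
    | zero => rfl
    | succ n ih => rw [rsIndex, pow_succ, pow_succ]; linarith
  rw [← h, Int.mul_ediv_cancel_left _ three_ne_zero]

lemma rsIndex_mem_Ioo {n : ℕ} (hn : 1 ≤ n) : rsIndex n ∈ Set.Ioo 0 (2 ^ n) := by
  induction n, hn using Nat.le_induction with
  | base => constructor <;> decide
  | succ n hn ih => rw [rsIndex, pow_succ]; constructor <;> linarith [ih.1, ih.2]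

noncomputable def rsAuto (n : ℕ) : ℤ := (correlation (rsP n) (rsP n)).coeff (rsIndex n)

noncomputable def rsCross (n : ℕ) : ℤ := (correlation (rsP n) (rsQ n)).coeff (rsIndex n - 2 ^ n)

lemma rsAuto_succ {n : ℕ} (hn : 1 ≤ n) :
    rsAuto (n + 1) = (correlation (rsP n) (rsQ n)).coeff (2 ^ n - rsIndex n) := by
  obtain ⟨h0, h1⟩ := rsIndex_mem_Ioo hn
  have hk : rsIndex (n + 1) = 2 * 2 ^ n - rsIndex n := by rw [rsIndex, pow_succ, mul_comm]
  obtain ⟨hPP, hQQ, -, -⟩ := coeff_correlation_rs_eq_zero n (rsIndex (n + 1))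
    (by rw [hk, abs_of_pos (by linarith)]; linarith)
  obtain ⟨-, -, -, hQP⟩ := coeff_correlation_rs_eq_zero n (rsIndex (n + 1) + 2 ^ n)
    (by rw [hk, abs_of_pos (by linarith)]; linarith)
  rw [rsAuto, coeff_correlation_rsP_succ, hPP, hQQ, hQP, hk]
  ring_nf

lemma coeff_correlation_rsP_rsQ_succ_rsIndex {n : ℕ} (hn : 1 ≤ n) :
    (correlation (rsP (n + 1)) (rsQ (n + 1))).coeff (rsIndex n) = 2 * rsAuto n - rsCross n := by
  obtain ⟨h0, h1⟩ := rsIndex_mem_Ioo hn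
  obtain ⟨-, -, -, hQP⟩ := coeff_correlation_rs_eq_zero n (rsIndex n + 2 ^ n)
    (by rw [abs_of_pos (by positivity)]; linarith)
  rw [coeff_correlation_rsP_rsQ_succ, coeff_correlation_rsQ_of_ne_zero n h0.ne', hQP, rsAuto,
    rsCross]
  ring

lemma rsCross_succ {n : ℕ} (hn : 1 ≤ n) : rsCross (n + 1) = 2 * rsAuto n + rsCross n := by
  obtain ⟨h0, h1⟩ := rsIndex_mem_Ioo hn
  obtain ⟨-, -, hPQ, -⟩ := coeff_correlation_rs_eq_zero n (-rsIndex n - 2 ^ n)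
    (by rw [abs_of_neg (by linarith)]; linarith)
  have hk : rsIndex (n + 1) - 2 ^ (n + 1) = -rsIndex n := by rw [rsIndex]; ring
  rw [rsCross, hk, coeff_correlation_rsP_rsQ_succ,
    coeff_correlation_rsQ_of_ne_zero n (neg_ne_zero.mpr h0.ne'), hPQ, coeff_correlation_neg,
    show -rsIndex n + 2 ^ n = -(rsIndex n - 2 ^ n) by ring, coeff_correlation_neg, rsAuto, rsCross]
  ring

lemma rsAuto_add_two {n : ℕ} (hn : 1 ≤ n) : rsAuto (n + 2) = 2 * rsAuto n - rsCross n := by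
  rw [rsAuto_succ (by omega), show 2 ^ (n + 1) - rsIndex (n + 1) = rsIndex n by rw [rsIndex]; ring,
    coeff_correlation_rsP_rsQ_succ_rsIndex hn]

lemma rsAuto_zero : rsAuto 0 = 0 := by
  simp [rsAuto, rsIndex, rsP_zero, correlation, LaurentPolynomial.coeff_one]

lemma rsAuto_one : rsAuto 1 = 1 := by
  rw [rsAuto, show rsIndex 1 = 1 by decide, coeff_correlation_rsP_succ]
  simp [rsP_zero, rsQ_zero, correlation, LaurentPolynomial.coeff_one]

lemma rsAuto_two : rsAuto 2 = -1 := by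
  rw [rsAuto_succ le_rfl, show (2 : ℤ) ^ 1 - rsIndex 1 = 1 by decide,
    coeff_correlation_rsP_rsQ_succ]
  simp [rsP_zero, rsQ_zero, correlation, LaurentPolynomial.coeff_one]

lemma rsCross_one : rsCross 1 = 1 := by
  rw [rsCross, show rsIndex 1 - 2 ^ 1 = -1 by decide, coeff_correlation_rsP_rsQ_succ]
  simp [rsP_zero, rsQ_zero, correlation, LaurentPolynomial.coeff_one]

lemma rsAuto_three : rsAuto 3 = 1 := by
  rw [rsAuto_add_two le_rfl, rsAuto_one, rsCross_one]; rfl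

lemma rsAuto_add_three (n : ℕ) :
    rsAuto (n + 3) = rsAuto (n + 2) + 2 * rsAuto (n + 1) - 4 * rsAuto n := by
  rcases Nat.eq_zero_or_pos n with rfl | hn
  · rw [rsAuto_zero, rsAuto_one, rsAuto_two, rsAuto_three]; rfl
  · rw [rsAuto_add_two (n := n + 1) (by omega), rsCross_succ hn, rsAuto_add_two hn]
    ring

lemma odd_rsAuto {n : ℕ} (hn : 1 ≤ n) : Odd (rsAuto n) := by
  suffices h : ∀ m, Odd (rsAuto (m + 1)) ∧ Odd (rsAuto (m + 2)) by
    obtain ⟨m, rfl⟩ := Nat.exists_eq_add_of_le' hn; exact (h m).1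
  intro m
  induction m with
  | zero => rw [rsAuto_one, rsAuto_two]; decide
  | succ m ih =>
    refine ⟨ih.2, ?_⟩
    rw [rsAuto_add_three, show rsAuto (m + 2) + 2 * rsAuto (m + 1) - 4 * rsAuto m =
      rsAuto (m + 2) + 2 * (rsAuto (m + 1) - 2 * rsAuto m) by ring]
    exact ih.2.add_even (even_two_mul _)

open Filter Asymptotics

lemma isBigO_sqrt_pow_of_recurrence_two {p q : ℝ} {e : ℕ → ℝ} (hpq : p ^ 2 < 4 * q)
    (he : ∀ n, e (n + 2) + p * e (n + 1) + q * e n = 0) :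
    e =O[atTop] fun n => √q ^ n := by
  have hq : 0 < q := by nlinarith [sq_nonneg p]
  have hc : 0 < q - p ^ 2 / 4 := by linarith
  set E : ℕ → ℝ := fun n => e (n + 1) ^ 2 + p * e (n + 1) * e n + q * e n ^ 2 with hE
  have hE_pow : ∀ n, E n = E 0 * q ^ n := by
    intro n
    induction n with
    | zero => simp
    | succ n ih =>
      rw [pow_succ, ← mul_assoc, ← ih, hE]
      linear_combination (e (n + 2) - q * e n) * he n
  have hE_ge : ∀ n, (q - p ^ 2 / 4) * e n ^ 2 ≤ E n := fun n => by
    nlinarith [sq_nonneg (e (n + 1) + p / 2 * e n)]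
  have hE0 : 0 ≤ E 0 / (q - p ^ 2 / 4) :=
    div_nonneg (by nlinarith [hE_ge 0, sq_nonneg (e 0)]) hc.le
  refine IsBigO.of_bound (√(E 0 / (q - p ^ 2 / 4))) (Eventually.of_forall fun n => ?_)
  rw [Real.norm_eq_abs, norm_pow, Real.norm_of_nonneg (Real.sqrt_nonneg _)]
  refine abs_le_of_sq_le_sq ?_ (by positivity)
  rw [mul_pow, Real.sq_sqrt hE0, ← pow_mul, mul_comm n, pow_mul, Real.sq_sqrt hq.le,
    div_mul_eq_mul_div, ← hE_pow, le_div_iff₀ hc, mul_comm]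
  exact hE_ge n

lemma pow_isBigO_of_recurrence_three {r p q : ℝ} {y : ℕ → ℝ} (hpq : p ^ 2 < 4 * q)
    (hqr : q < r ^ 2)
    (hy : ∀ n, y (n + 3) = (r - p) * y (n + 2) + (r * p - q) * y (n + 1) + r * q * y n)
    (hy₀ : y 2 + p * y 1 + q * y 0 ≠ 0) :
    (fun n => r ^ n) =O[atTop] y := by
  have hD : 0 < r ^ 2 + p * r + q := by nlinarith [sq_nonneg (r + p / 2)]
  set α := (y 2 + p * y 1 + q * y 0) / (r ^ 2 + p * r + q)
  have hα₀ : α ≠ 0 := div_ne_zero hy₀ hD.ne'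
  set e : ℕ → ℝ := fun n => y n - α * r ^ n with he
  have hg : ∀ n, e (n + 2) + p * e (n + 1) + q * e n = r ^ n * (e 2 + p * e 1 + q * e 0) := by
    intro n
    induction n with
    | zero => simp
    | succ n ih =>
      rw [pow_succ, mul_right_comm, ← ih, he]
      dsimp only
      linear_combination hy n
  have hg₀ : e 2 + p * e 1 + q * e 0 = 0 := by
    have hαD : α * (r ^ 2 + p * r + q) = y 2 + p * y 1 + q * y 0 := div_mul_cancel₀ _ hD.ne'
    simp only [he]
    linear_combination -hαD
  have hρ : √q < |r| := by
    rw [Real.sqrt_lt' (abs_pos.mpr ?_), sq_abs]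
    · exact hqr
    · rintro rfl; nlinarith [sq_nonneg p]
  have he_o : e =o[atTop] fun n => α * r ^ n := by
    have he_O := isBigO_sqrt_pow_of_recurrence_two hpq fun n => by rw [hg, hg₀, mul_zero]
    refine (he_O.trans_isLittleO
      (isLittleO_pow_pow_of_lt_left (Real.sqrt_nonneg q) hρ)).trans_isBigO ?_
    exact (IsBigO.of_bound 1 (Eventually.of_forall fun n => by simp)).trans
      (isBigO_self_const_mul hα₀ _ _)
  exact (isBigO_self_const_mul hα₀ _ _).trans
    (he_o.right_isBigO_add.congr_right fun n => by simp [he])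

lemma sqrt_root_of_lambda_cubic {l : ℝ} (hl : l ^ 3 - 5 * l ^ 2 + 12 * l - 16 = 0) :
    √l ^ 3 + √l ^ 2 - 2 * √l - 4 = 0 ∧ 3 / 2 < √l ∧ √l < 2 := by
  have hl₁ : 9 / 4 < l := by nlinarith [sq_nonneg (l - 5 / 3), sq_nonneg l]
  have hl₂ : l < 4 := by nlinarith [sq_nonneg (l - 5 / 3), sq_nonneg l]
  have hs : √l ^ 2 = l := Real.sq_sqrt (by linarith)
  have hs₁ : 3 / 2 < √l := by nlinarith [Real.sqrt_nonneg l]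
  have hs₂ : √l < 2 := by nlinarith [Real.sqrt_nonneg l]
  refine ⟨?_, hs₁, hs₂⟩
  have hfac : (√l ^ 3 + √l ^ 2 - 2 * √l - 4) * (√l ^ 3 - √l ^ 2 - 2 * √l + 4) = 0 := by
    linear_combination hl + (√l ^ 4 + √l ^ 2 * l + l ^ 2 - 5 * (√l ^ 2 + l) + 12) * hs
  exact (mul_eq_zero.mp hfac).resolve_right (by nlinarith)

theorem autocorrelation_lower_bound_at_kn (l : ℝ)
    (hl : l ^ 3 - 5 * l ^ 2 + 12 * l - 16 = 0) :
    ∃ C₁ : ℝ, 0 < C₁ ∧ ∀ n : ℕ, 1 ≤ n →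
      C₁ * l ^ ((n : ℝ) / 2) ≤
        ‖fc (fP n) ((2 * 2 ^ n + (-1) ^ n) / 3 : ℤ)‖ := by
  obtain ⟨hcubic, hs₁, hs₂⟩ := sqrt_root_of_lambda_cubic hl
  set s := √l
  have hinit : (rsAuto 2 : ℝ) + (-s - 1) * rsAuto 1 + (s ^ 2 + s - 2) * rsAuto 0 ≠ 0 := by
    rw [rsAuto_zero, rsAuto_one, rsAuto_two]
    push_cast
    intro h
    linarith
  have hrec : (fun n => (-s) ^ n) =O[atTop] fun n => (rsAuto n : ℝ) := by
    refine pow_isBigO_of_recurrence_three (p := -s - 1) (q := s ^ 2 + s - 2) (by nlinarith)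
      (by nlinarith) (fun n => ?_) hinit
    have h := congrArg (fun x : ℤ => (x : ℝ)) (rsAuto_add_three n)
    push_cast at h
    linear_combination h + (rsAuto n : ℝ) * hcubic
  obtain ⟨C, hC, hbound⟩ := bound_of_isBigO_nat_atTop hrec
  refine ⟨C⁻¹, inv_pos.mpr hC, fun n hn => ?_⟩
  have hne : (rsAuto n : ℝ) ≠ 0 :=
    Int.cast_ne_zero.mpr fun h0 => by simpa [h0] using odd_rsAuto hn
  have h := hbound hne
  rw [norm_pow, norm_neg, Real.norm_of_nonneg (Real.sqrt_nonneg l)] at h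
  rw [Real.rpow_div_two_eq_sqrt _ (by nlinarith), Real.rpow_natCast, ← rsIndex_eq, fc_fP,
    ← rsAuto, Complex.norm_intCast, inv_mul_le_iff₀ hC]
  exact h
end

section
/- If k_n is an odd integer with −2^n < k_n < 2^n and −2^n < k_n ≤ −2^{n−1} (i.e., k_n ∈ S_n¹), then with k_n' = k_n + 2^n and k_{n−1} = k_n', one has: the Fourier coefficient of |P_n|² at k_n equals the Fourier coefficient of P_{n−1}\overline{Q_{n−1}} at k_{n−1}' := k_{n−1} − 2^{n−1}; the coefficient of \overline{P_n}Q_n at k_n' equals 2·(coeff of |P_{n−1}|² at k_{n−1}) − (coeff of \overline{P_{n−1}}Q_{n−1} at k_{n−1}'); and the coefficient of P_n\overline{Q_n} at k_n' equals 2·(coeff of |P_{n−1}|² at k_{n−1}) + (coeff of \overline{P_{n−1}}Q_{n−1} at k_{n−1}'). -/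
open Polynomial

/-! ### Auxiliary machinery -/

lemma RSP_succ (n : ℕ) : RSP (n+1) = RSP n + X ^ (2^n) * RSQ n := rfl
lemma RSQ_succ (n : ℕ) : RSQ (n+1) = RSP n - X ^ (2^n) * RSQ n := rfl

lemma RS_deg (n : ℕ) : (RSP n).natDegree < 2^n ∧ (RSQ n).natDegree < 2^n := by
  induction n with
  | zero => constructor <;> simp [RSP, RSQ, RS]
  | succ n ih =>
    have hX : (X ^ (2^n) * RSQ n : Polynomial ℤ).natDegree ≤ 2^n + (RSQ n).natDegree := by
      refine (natDegree_mul_le).trans ?_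
      simp [natDegree_X_pow]
    have h2 : (2:ℕ)^(n+1) = 2^n + 2^n := by ring
    constructor
    · rw [RSP_succ]
      refine (natDegree_add_le _ _).trans_lt ?_
      rw [h2]
      exact max_lt (by omega) (by omega)
    · rw [RSQ_succ]
      refine (natDegree_sub_le _ _).trans_lt ?_
      rw [h2]
      exact max_lt (by omega) (by omega)

/-- integer-indexed coefficient of a polynomial -/
def zc (B : Polynomial ℤ) (m : ℤ) : ℤ := if 0 ≤ m then B.coeff m.toNat else 0

/-- discrete correlation: `∑_j A_j B_{j+k}` -/
def cc (M : ℕ) (A B : Polynomial ℤ) (k : ℤ) : ℤ :=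
  ∑ j ∈ Finset.range M, A.coeff j * zc B (j + k)

lemma zc_add (B B' : Polynomial ℤ) (m : ℤ) : zc (B + B') m = zc B m + zc B' m := by
  unfold zc; split <;> simp

lemma zc_sub (B B' : Polynomial ℤ) (m : ℤ) : zc (B - B') m = zc B m - zc B' m := by
  unfold zc; split <;> simp

lemma zc_X_pow_mul (a : ℕ) (B : Polynomial ℤ) (m : ℤ) : zc (X ^ a * B) m = zc B (m - a) := by
  unfold zc
  rw [mul_comm]
  by_cases h : 0 ≤ m
  · rw [if_pos h, coeff_mul_X_pow']
    by_cases h2 : a ≤ m.toNat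
    · rw [if_pos h2, if_pos (by omega)]
      congr 1; omega
    · rw [if_neg h2, if_neg (by omega)]
  · rw [if_neg h, if_neg (by omega)]

lemma cc_add_left (M : ℕ) (A A' B : Polynomial ℤ) (k : ℤ) :
    cc M (A + A') B k = cc M A B k + cc M A' B k := by
  simp [cc, add_mul, Finset.sum_add_distrib]

lemma cc_sub_left (M : ℕ) (A A' B : Polynomial ℤ) (k : ℤ) :
    cc M (A - A') B k = cc M A B k - cc M A' B k := by
  simp [cc, sub_mul, Finset.sum_sub_distrib]

lemma cc_add_right (M : ℕ) (A B B' : Polynomial ℤ) (k : ℤ) :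
    cc M A (B + B') k = cc M A B k + cc M A B' k := by
  simp [cc, zc_add, mul_add, Finset.sum_add_distrib]

lemma cc_sub_right (M : ℕ) (A B B' : Polynomial ℤ) (k : ℤ) :
    cc M A (B - B') k = cc M A B k - cc M A B' k := by
  simp [cc, zc_sub, mul_sub, Finset.sum_sub_distrib]

lemma cc_ext (M M' : ℕ) (A B : Polynomial ℤ) (k : ℤ) (hA : A.natDegree < M) (h : M ≤ M') :
    cc M' A B k = cc M A B k := by
  unfold cc
  refine (Finset.sum_subset (Finset.range_subset_range.2 h) ?_).symm
  intro j _ hj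
  rw [coeff_eq_zero_of_natDegree_lt (by simp at hj; omega), zero_mul]

lemma cc_shift (a M : ℕ) (A B : Polynomial ℤ) (k : ℤ) :
    cc (a + M) (X ^ a * A) B k = cc M A B (k + a) := by
  unfold cc
  rw [Finset.sum_range_add]
  have h1 : ∑ j ∈ Finset.range a, (X ^ a * A).coeff j * zc B (j + k) = 0 := by
    refine Finset.sum_eq_zero fun j hj => ?_
    rw [mul_comm (X ^ a), coeff_mul_X_pow', if_neg (by simp at hj; omega), zero_mul]
  rw [h1, zero_add]
  refine Finset.sum_congr rfl fun j _ => ?_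
  rw [mul_comm (X ^ a), coeff_mul_X_pow', if_pos (by omega)]
  congr 2
  · omega
  · push_cast; ring

lemma cc_shift_right (a M : ℕ) (A B : Polynomial ℤ) (k : ℤ) :
    cc M A (X ^ a * B) k = cc M A B (k - a) := by
  unfold cc
  refine Finset.sum_congr rfl fun j _ => ?_
  rw [zc_X_pow_mul]
  congr 1; ring

lemma cc_zero_left (M : ℕ) (A B : Polynomial ℤ) (k : ℤ) (h : k ≤ -(M : ℤ)) :
    cc M A B k = 0 := by
  refine Finset.sum_eq_zero fun j hj => ?_
  rw [zc, if_neg (by simp at hj; omega), mul_zero]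

lemma cc_zero_right (M : ℕ) (A B : Polynomial ℤ) (k : ℤ) (h : (B.natDegree : ℤ) < k) :
    cc M A B k = 0 := by
  refine Finset.sum_eq_zero fun j _ => ?_
  have hz : B.coeff ((j:ℤ) + k).toNat = 0 := coeff_eq_zero_of_natDegree_lt (by omega)
  rw [zc, if_pos (by omega), hz, mul_zero]

/-- parallelogram law `|P|² + |Q|²` is constant: off-zero correlations cancel -/
lemma para (n : ℕ) (k : ℤ) (hk : k ≠ 0) :
    cc (2^n) (RSP n) (RSP n) k + cc (2^n) (RSQ n) (RSQ n) k = 0 := by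
  induction n with
  | zero =>
    simp only [pow_zero]
    have : cc 1 (RSP 0) (RSP 0) k = zc (RSP 0) k := by
      simp [cc, RSP, RS]
    have h2 : cc 1 (RSQ 0) (RSQ 0) k = zc (RSQ 0) k := by
      simp [cc, RSQ, RS]
    rw [this, h2]
    have hz : ∀ B : Polynomial ℤ, B = 1 → zc B k = 0 := by
      rintro B rfl
      rw [zc]
      split_ifs with h
      · rw [Polynomial.coeff_one, if_neg (by omega)]
      · rfl
    rw [show RSP 0 = 1 from rfl, show RSQ 0 = 1 from rfl, hz _ rfl]
    norm_num
  | succ n ih =>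
    have hP := (RS_deg n).1
    have h2 : (2:ℕ)^(n+1) = 2^n + 2^n := by ring
    rw [RSP_succ, RSQ_succ, h2]
    rw [cc_add_left, cc_add_right, cc_add_right, cc_sub_left, cc_sub_right, cc_sub_right]
    have e1 : cc (2^n + 2^n) (RSP n) (RSP n) k = cc (2^n) (RSP n) (RSP n) k :=
      cc_ext _ _ _ _ _ hP (by omega)
    have e2 : cc (2^n + 2^n) (X ^ (2^n) * RSQ n) (X ^ (2^n) * RSQ n) k
        = cc (2^n) (RSQ n) (RSQ n) k := by
      rw [cc_shift, cc_shift_right, add_sub_cancel_right]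
    rw [e1, e2]
    linarith [ih]

lemma key_integral (c : ℤ) :
    ∫ t in (0:ℝ)..(2*Real.pi), Complex.exp ((c:ℂ) * (↑t * Complex.I)) =
      if c = 0 then (2*Real.pi : ℂ) else 0 := by
  split_ifs with h
  · subst h
    simp [intervalIntegral.integral_const]
  · have hc : (c:ℂ) * Complex.I ≠ 0 :=
      mul_ne_zero (Int.cast_ne_zero.2 h) Complex.I_ne_zero
    have harr : ∀ t : ℝ, (c:ℂ) * (↑t * Complex.I) = ((c:ℂ) * Complex.I) * ↑t := by
      intro t; ring
    simp_rw [harr]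
    rw [integral_exp_mul_complex hc]
    have h1 : (c:ℂ) * Complex.I * ((2:ℝ)*Real.pi : ℝ) = (c:ℂ) * (2 * (Real.pi:ℂ) * Complex.I) := by
      push_cast; ring
    rw [h1, Complex.exp_int_mul_two_pi_mul_I]
    simp

lemma cont_int (c' : ℂ) (d : ℤ) :
    IntervalIntegrable (fun t:ℝ => c' * Complex.exp ((d:ℂ) * (↑t * Complex.I)))
      MeasureTheory.volume 0 (2*Real.pi) := by
  apply Continuous.intervalIntegrable
  continuity

lemma innerSum (B : Polynomial ℤ) (N : ℕ) (hB : B.natDegree < N) (m : ℤ) :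
    ∑ l ∈ Finset.range N, (B.coeff l : ℂ) * (if ((l:ℤ) - m : ℤ) = 0 then 1 else 0)
      = ((zc B m : ℤ) : ℂ) := by
  by_cases hm : 0 ≤ m
  · have hiff : ∀ l : ℕ, (((l:ℤ) - m : ℤ) = 0) ↔ (l = m.toNat) := by intro l; omega
    simp_rw [hiff, mul_ite, mul_one, mul_zero]
    rw [Finset.sum_ite_eq' (Finset.range N) m.toNat (fun l => (B.coeff l : ℂ))]
    rw [zc, if_pos hm]
    by_cases hN : m.toNat ∈ Finset.range N
    · rw [if_pos hN]
    · rw [if_neg hN]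
      have : B.coeff m.toNat = 0 :=
        Polynomial.coeff_eq_zero_of_natDegree_lt (by simp at hN; omega)
      rw [this]; simp
  · rw [zc, if_neg hm]
    rw [Finset.sum_eq_zero]
    · simp
    · intro l _
      rw [if_neg (by omega), mul_zero]

lemma bridge (A B : Polynomial ℤ) (M N : ℕ) (hA : A.natDegree < M) (hB : B.natDegree < N)
    (k : ℤ) :
    fc (fun z => (starRingEnd ℂ) ((aeval z) A) * (aeval z) B) k = ((cc M A B k : ℤ) : ℂ) := by
  have hint : ∀ t : ℝ,
      (starRingEnd ℂ) ((aeval (Complex.exp (↑t * Complex.I))) A) *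
        (aeval (Complex.exp (↑t * Complex.I))) B * Complex.exp (-(k : ℂ) * ↑t * Complex.I)
      = ∑ j ∈ Finset.range M, ∑ l ∈ Finset.range N,
          ((A.coeff j : ℂ) * (B.coeff l : ℂ)) *
            Complex.exp (((((l:ℤ) - j - k : ℤ)) : ℂ) * (↑t * Complex.I)) := by
    intro t
    rw [Polynomial.aeval_eq_sum_range' hA, Polynomial.aeval_eq_sum_range' hB]
    simp_rw [zsmul_eq_mul, ← Complex.exp_nat_mul]
    rw [map_sum, Finset.sum_mul_sum, Finset.sum_mul]
    refine Finset.sum_congr rfl fun j _ => ?_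
    rw [Finset.sum_mul]
    refine Finset.sum_congr rfl fun l _ => ?_
    rw [map_mul, ← Complex.exp_conj]
    have hconj : (starRingEnd ℂ) ((j:ℂ) * (↑t * Complex.I)) = (-(j:ℤ) : ℂ) * (↑t * Complex.I) := by
      simp [map_mul, Complex.conj_I, Complex.conj_ofReal]
    rw [hconj, map_intCast]
    have hE : Complex.exp ((-(j:ℤ) : ℂ) * (↑t * Complex.I)) * Complex.exp ((l:ℂ) * (↑t * Complex.I)) *
        Complex.exp (-(k:ℂ) * ↑t * Complex.I)
        = Complex.exp (((((l:ℤ) - j - k : ℤ)) : ℂ) * (↑t * Complex.I)) := by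
      rw [← Complex.exp_add, ← Complex.exp_add]
      congr 1
      push_cast; ring
    rw [← hE]; ring
  unfold fc
  simp only [hint]
  rw [intervalIntegral.integral_finset_sum]
  swap
  · intro j _
    exact (continuous_finset_sum _ fun l _ => by continuity).intervalIntegrable _ _
  have hstep : ∀ j ∈ Finset.range M,
      (∫ t in (0:ℝ)..(2*Real.pi), ∑ l ∈ Finset.range N,
        ((A.coeff j : ℂ) * (B.coeff l : ℂ)) *
          Complex.exp (((((l:ℤ) - j - k : ℤ)) : ℂ) * (↑t * Complex.I)))
      = (2*Real.pi : ℂ) * ((A.coeff j : ℂ) * ((zc B (j + k) : ℤ) : ℂ)) := by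
    intro j _
    rw [intervalIntegral.integral_finset_sum (fun l _ => cont_int _ _)]
    simp_rw [intervalIntegral.integral_const_mul, key_integral]
    have h2 := innerSum B N hB (j + k)
    calc ∑ l ∈ Finset.range N, (A.coeff j : ℂ) * (B.coeff l : ℂ) *
            (if ((l:ℤ) - j - k : ℤ) = 0 then (2*Real.pi : ℂ) else 0)
        = (2*Real.pi : ℂ) * (A.coeff j : ℂ) * ∑ l ∈ Finset.range N,
            (B.coeff l : ℂ) * (if ((l:ℤ) - (j+k) : ℤ) = 0 then 1 else 0) := by
          rw [Finset.mul_sum]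
          refine Finset.sum_congr rfl fun l _ => ?_
          by_cases hP : ((l:ℤ) - j - k : ℤ) = 0
          · rw [if_pos hP, if_pos (by omega)]; ring
          · rw [if_neg hP, if_neg (by omega)]; ring
      _ = (2*Real.pi : ℂ) * ((A.coeff j : ℂ) * ((zc B (j + k) : ℤ) : ℂ)) := by
          rw [h2]; ring
  rw [Finset.sum_congr rfl hstep, ← Finset.mul_sum, ← mul_assoc]
  have hpi : ((1:ℂ) / (2 * (Real.pi:ℂ))) * (2*Real.pi : ℂ) = 1 := by
    rw [div_mul_eq_mul_div, one_mul, div_eq_one_iff_eq]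
    exact mul_ne_zero two_ne_zero (Complex.ofReal_ne_zero.2 Real.pi_ne_zero)
  rw [hpi, one_mul, cc]
  push_cast
  rfl

lemma fc_fP_s19 (n : ℕ) (k : ℤ) :
    fc (fP n) k = ((cc (2^n) (RSP n) (RSP n) k : ℤ) : ℂ) := by
  have h : fP n = fun z => (starRingEnd ℂ) ((aeval z) (RSP n)) * (aeval z) (RSP n) := by
    funext z
    simp only [fP, Pe]
    ring
  rw [h]
  exact bridge _ _ _ _ (RS_deg n).1 (RS_deg n).1 k

lemma fc_fPQ (n : ℕ) (k : ℤ) :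
    fc (fPQ n) k = ((cc (2^n) (RSP n) (RSQ n) k : ℤ) : ℂ) := by
  have h : fPQ n = fun z => (starRingEnd ℂ) ((aeval z) (RSP n)) * (aeval z) (RSQ n) := by
    funext z
    simp only [fPQ, Pe, Qe]
  rw [h]
  exact bridge _ _ _ _ (RS_deg n).1 (RS_deg n).2 k

lemma fc_fQP (n : ℕ) (k : ℤ) :
    fc (fQP n) k = ((cc (2^n) (RSQ n) (RSP n) k : ℤ) : ℂ) := by
  have h : fQP n = fun z => (starRingEnd ℂ) ((aeval z) (RSQ n)) * (aeval z) (RSP n) := by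
    funext z
    simp only [fQP, Pe, Qe]
    ring
  rw [h]
  exact bridge _ _ _ _ (RS_deg n).2 (RS_deg n).1 k

theorem omega_recursion_case_S1 (n : ℕ) (hn : 1 ≤ n) (k : ℤ) (hodd : Odd k)
    (h1 : -(2 ^ n) < k) (h2 : k ≤ -(2 ^ (n - 1))) :
    fc (fP n) k = fc (fQP (n - 1)) ((k + 2 ^ n) - 2 ^ (n - 1)) ∧
    fc (fPQ n) (k + 2 ^ n) =
      2 * fc (fP (n - 1)) (k + 2 ^ n) - fc (fPQ (n - 1)) ((k + 2 ^ n) - 2 ^ (n - 1)) ∧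
    fc (fQP n) (k + 2 ^ n) =
      2 * fc (fP (n - 1)) (k + 2 ^ n) + fc (fPQ (n - 1)) ((k + 2 ^ n) - 2 ^ (n - 1)) := by
  obtain ⟨m, rfl⟩ : ∃ m, n = m + 1 := ⟨n - 1, (Nat.succ_pred_eq_of_pos hn).symm⟩
  simp only [Nat.add_sub_cancel] at *
  have hdP := (RS_deg m).1
  have hdQ := (RS_deg m).2
  -- cast facts
  have hc : ((2^m : ℕ) : ℤ) = 2^m := by push_cast; ring
  have hpow : ((2:ℤ)^(m+1)) = 2^m + 2^m := by ring
  have hm2 : (0:ℤ) < 2^m := by positivity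
  have hdPz : ((RSP m).natDegree : ℤ) < 2^m := by exact_mod_cast hdP
  have h2' : k ≤ -((2^m : ℕ) : ℤ) := by rw [hc]; exact h2
  -- the shifted index
  have hk1 : (0:ℤ) < k + 2^(m+1) := by omega
  have hk2 : k + 2^(m+1) ≤ 2^m := by omega
  have hkne : k + 2^(m+1) ≠ 0 := by omega
  have hMeq : (2:ℕ)^(m+1) = 2^m + 2^m := by ring
  -- Identity 1
  have G1 : cc (2^(m+1)) (RSP (m+1)) (RSP (m+1)) k
      = cc (2^m) (RSQ m) (RSP m) (k + 2^(m+1) - 2^m) := by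
    rw [RSP_succ, hMeq, cc_add_left, cc_add_right, cc_add_right]
    rw [cc_shift, cc_shift, cc_shift_right, cc_shift_right]
    rw [cc_ext (2^m) (2^m + 2^m) _ _ _ hdP (by omega),
        cc_ext (2^m) (2^m + 2^m) _ _ _ hdP (by omega)]
    rw [cc_zero_left _ _ _ _ h2']
    rw [cc_zero_left _ _ _ _ (by omega : k - ((2^m:ℕ):ℤ) ≤ -((2^m:ℕ):ℤ))]
    rw [cc_zero_left _ _ _ _ (by omega : k + ((2^m:ℕ):ℤ) - ((2^m:ℕ):ℤ) ≤ -((2^m:ℕ):ℤ))]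
    have : k + ((2^m:ℕ):ℤ) = k + 2^(m+1) - 2^m := by omega
    rw [this]
    ring
  -- parallelogram at the shifted index
  have hpar : cc (2^m) (RSQ m) (RSQ m) (k + 2^(m+1))
      = -(cc (2^m) (RSP m) (RSP m) (k + 2^(m+1))) := by
    have := para m (k + 2^(m+1)) hkne
    linarith
  -- Identity 2
  have G2 : cc (2^(m+1)) (RSP (m+1)) (RSQ (m+1)) (k + 2^(m+1))
      = 2 * cc (2^m) (RSP m) (RSP m) (k + 2^(m+1))
        - cc (2^m) (RSP m) (RSQ m) (k + 2^(m+1) - 2^m) := by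
    rw [RSP_succ, RSQ_succ, hMeq, cc_add_left, cc_sub_right, cc_sub_right]
    rw [cc_shift, cc_shift, cc_shift_right, cc_shift_right]
    rw [cc_ext (2^m) (2^m + 2^m) _ _ _ hdP (by omega),
        cc_ext (2^m) (2^m + 2^m) _ _ _ hdP (by omega)]
    rw [cc_zero_right _ _ _ _ (by omega : ((RSP m).natDegree : ℤ) < k + 2^(m+1) + ((2^m:ℕ):ℤ))]
    have e1 : k + 2^(m+1) + ((2^m:ℕ):ℤ) - ((2^m:ℕ):ℤ) = k + 2^(m+1) := by omega
    have e2 : k + 2^(m+1) - ((2^m:ℕ):ℤ) = k + 2^(m+1) - 2^m := by omega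
    rw [e1, e2, hpar]
    ring
  -- Identity 3
  have G3 : cc (2^(m+1)) (RSQ (m+1)) (RSP (m+1)) (k + 2^(m+1))
      = 2 * cc (2^m) (RSP m) (RSP m) (k + 2^(m+1))
        + cc (2^m) (RSP m) (RSQ m) (k + 2^(m+1) - 2^m) := by
    rw [RSP_succ, RSQ_succ, hMeq, cc_sub_left, cc_add_right, cc_add_right]
    rw [cc_shift, cc_shift, cc_shift_right, cc_shift_right]
    rw [cc_ext (2^m) (2^m + 2^m) _ _ _ hdP (by omega),
        cc_ext (2^m) (2^m + 2^m) _ _ _ hdP (by omega)]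
    rw [cc_zero_right _ _ _ _ (by omega : ((RSP m).natDegree : ℤ) < k + 2^(m+1) + ((2^m:ℕ):ℤ))]
    have e1 : k + 2^(m+1) + ((2^m:ℕ):ℤ) - ((2^m:ℕ):ℤ) = k + 2^(m+1) := by omega
    have e2 : k + 2^(m+1) - ((2^m:ℕ):ℤ) = k + 2^(m+1) - 2^m := by omega
    rw [e1, e2, hpar]
    ring
  refine ⟨?_, ?_, ?_⟩
  · rw [fc_fP_s19, fc_fQP, G1]
  · rw [fc_fPQ, fc_fP_s19, fc_fPQ, G2]
    push_cast
    ring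
  · rw [fc_fQP, fc_fP_s19, fc_fPQ, G3]
    push_cast
    ring
end
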